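/- arXiv:2410.08361 — 2 statements merged into one kernel-verified Lean document; each statement's English description precedes it below -/
import Mathlib

section
/- For κ ∈ (0,1] and θ ∈ (0,1], the sum Σ_{k=1}^{T} (1/k^θ) ∏_{i=k+1}^{T} (1 - κ/i^θ) is at most 3/κ. -/
open Finset Real

theorem sum_rpow_prod_le (κ θ : ℝ) (hκ0 : 0 < κ) (hκ1 : κ ≤ 1)
    (hθ0 : 0 < θ) (hθ1 : θ ≤ 1) (T : ℕ) (hT : 1 ≤ T) :
    ∑ k ∈ Finset.Icc 1 T,
      (1 / (k : ℝ) ^ θ) * ∏ i ∈ Finset.Icc (k + 1) T, (1 - κ / (i : ℝ) ^ θ) ≤ 3 / κ := by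
  set Q : ℕ → ℝ := fun k => ∏ i ∈ Finset.Icc (k + 1) T, (1 - κ / (i : ℝ) ^ θ) with hQ
  have hone : ∀ k : ℕ, 1 ≤ k → (1:ℝ) ≤ (k:ℝ) ^ θ := by
    intro k hk
    exact Real.one_le_rpow (by exact_mod_cast hk) hθ0.le
  have hfac : ∀ k : ℕ, 1 ≤ k → 0 ≤ 1 - κ / (k:ℝ) ^ θ := by
    intro k hk
    have h1 := hone k hk
    have : κ / (k:ℝ) ^ θ ≤ 1 := by
      rw [div_le_one (by linarith)]
      linarith
    linarith
  have key : ∀ k : ℕ, 1 ≤ k → k ≤ T →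
      (1 / (k : ℝ) ^ θ) * Q k = (1/κ) * (Q k - Q (k-1)) := by
    intro k hk hkT
    have hpos : (0:ℝ) < (k:ℝ) ^ θ := lt_of_lt_of_le one_pos (hone k hk)
    have hQk : Q (k-1) = (1 - κ / (k:ℝ)^θ) * Q k := by
      have h1 : (k - 1) + 1 = k := Nat.succ_pred_eq_of_pos hk
      rw [hQ]
      simp only [h1]
      rw [Finset.Icc_eq_cons_Ioc hkT, Finset.prod_cons]
      congr 1
      rw [← Finset.Icc_add_one_left_eq_Ioc]
    rw [hQk]
    field_simp
    ring
  have hsum : ∑ k ∈ Finset.Icc 1 T,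
      (1 / (k : ℝ) ^ θ) * Q k = (1/κ) * (Q T - Q 0) := by
    rw [← Finset.Ico_add_one_right_eq_Icc, Finset.sum_Ico_eq_sum_range]
    have hc : ∀ i ∈ Finset.range (T + 1 - 1), (1 / ((1+i : ℕ) : ℝ) ^ θ) * Q (1+i)
        = (1/κ) * (Q (i+1) - Q i) := by
      intro i hi
      have hi' : i < T := by simpa using (Finset.mem_range.mp hi)
      have := key (1+i) (by omega) (by omega)
      simpa [Nat.add_comm, Nat.add_sub_cancel] using this
    rw [Finset.sum_congr rfl hc, ← Finset.mul_sum, Finset.sum_range_sub (fun n => Q n)]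
    norm_num
  have hQT : Q T = 1 := by
    rw [hQ]
    simp [Finset.Icc_eq_empty_of_lt (Nat.lt_succ_self T)]
  have hQ0 : 0 ≤ Q 0 := by
    rw [hQ]
    refine Finset.prod_nonneg fun i hi => hfac i ?_
    exact (Finset.mem_Icc.mp hi).1
  have h1 : ∑ k ∈ Finset.Icc 1 T, (1 / (k : ℝ) ^ θ) * Q k ≤ 1 / κ := by
    rw [hsum, hQT]
    have : (Q 0 : ℝ) ≥ 0 := hQ0
    have h2 : 1 - Q 0 ≤ 1 := by linarith
    calc (1/κ) * (1 - Q 0) ≤ (1/κ) * 1 := by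
          apply mul_le_mul_of_nonneg_left h2 (by positivity)
      _ = 1 / κ := mul_one _
  calc ∑ k ∈ Finset.Icc 1 T, (1 / (k : ℝ) ^ θ) * Q k ≤ 1 / κ := h1
    _ ≤ 3 / κ := by
        gcongr
        norm_num
end

section
/- Let W be a real Hilbert space, and for each t let V_t : W → ℝ be differentiable, α-strongly convex and η-smooth (α ≤ η). Given sequences defined by w_{t+1} = w_t − γ_t ∇V_t(w_t) and w'_{t+1} = w'_t − γ_t ∇V_t(w⋆), where w⋆ is a common minimizer of all V_t and γ_t η²/α ≤ 1, the following holds: ‖w_{t+1} − w'_{t+1}‖² ≤ (1 − γ_t α)‖w_t − w'_t‖² + γ_t η‖w'_t − w⋆‖². -/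
/-!
Since `w⋆` minimizes `V_t` and `V_t` is `η`-smooth, `∇V_t(w⋆) = 0`, so `w'` does not move and the
step is `(u - b) - γ g` with `u = w_t - w⋆`, `b = w'_t - w⋆`, `g = ∇V_t(w_t)`. Combining strong
convexity and smoothness at the four points `w_t - b`, `w_t`, `w⋆ + b`, `w⋆` gives
`2⟪g - α u, b⟫ - (η - α)‖b‖² ≤ ⟪g, u⟫ - α‖u‖²`, which absorbs every term involving `b`.
What is left is `γ‖g‖² ≤ ⟪g, u⟫`, which follows from `‖g‖ ≤ η‖u‖`, `α‖u‖² ≤ ⟪g, u⟫`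
and `γ η² ≤ α`.
-/

open RealInnerProductSpace

section GradientInequalities

variable {W : Type*} [NormedAddCommGroup W] [InnerProductSpace ℝ W]
  {f : W → ℝ} {g : W → W} {α η : ℝ}

theorem le_sub_norm_sq_div_of_smooth (hη : 0 < η)
    (hsmooth : ∀ x y, f x ≤ f y + ⟪g y, x - y⟫ + η / 2 * ‖x - y‖ ^ 2) (x : W) :
    f (x - η⁻¹ • g x) ≤ f x - ‖g x‖ ^ 2 / (2 * η) := by
  have h := hsmooth (x - η⁻¹ • g x) x
  rw [sub_sub_cancel_left, inner_neg_right, real_inner_smul_right, real_inner_self_eq_norm_sq,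
    norm_neg, norm_smul, Real.norm_of_nonneg (inv_nonneg.mpr hη.le)] at h
  convert h using 1
  field_simp
  ring

theorem gradient_eq_zero_of_smooth_of_isMin (hη : 0 < η)
    (hsmooth : ∀ x y, f x ≤ f y + ⟪g y, x - y⟫ + η / 2 * ‖x - y‖ ^ 2)
    {y : W} (hmin : ∀ x, f y ≤ f x) : g y = 0 := by
  have h := (hmin _).trans (le_sub_norm_sq_div_of_smooth hη hsmooth y)
  have : ‖g y‖ ^ 2 / (2 * η) ≤ 0 := by linarith
  have : ‖g y‖ ^ 2 ≤ 0 := by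
    simpa using (div_le_iff₀ (by positivity)).mp this
  simpa using this

theorem norm_gradient_sq_le_of_smooth_of_isMin (hη : 0 < η)
    (hsmooth : ∀ x y, f x ≤ f y + ⟪g y, x - y⟫ + η / 2 * ‖x - y‖ ^ 2)
    {y : W} (hmin : ∀ x, f y ≤ f x) (x : W) :
    ‖g x‖ ^ 2 ≤ η ^ 2 * ‖x - y‖ ^ 2 := by
  have hdescent := (hmin _).trans (le_sub_norm_sq_div_of_smooth hη hsmooth x)
  have hupper := hsmooth x y
  rw [gradient_eq_zero_of_smooth_of_isMin hη hsmooth hmin, inner_zero_left, add_zero] at hupper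
  have : ‖g x‖ ^ 2 / (2 * η) ≤ η / 2 * ‖x - y‖ ^ 2 := by linarith
  rw [div_le_iff₀ (by positivity)] at this
  linarith

theorem mul_norm_sub_sq_le_inner_of_strongly_convex
    (hstrong : ∀ x y, f y + ⟪g y, x - y⟫ + α / 2 * ‖x - y‖ ^ 2 ≤ f x) (x y : W) :
    α * ‖x - y‖ ^ 2 ≤ ⟪g x - g y, x - y⟫ := by
  have hxy := hstrong x y
  have hyx := hstrong y x
  rw [← neg_sub x y, inner_neg_right, norm_neg] at hyx
  rw [inner_sub_left]
  linarith

theorem two_inner_sub_le_of_strongly_convex_of_smooth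
    (hstrong : ∀ x y, f y + ⟪g y, x - y⟫ + α / 2 * ‖x - y‖ ^ 2 ≤ f x)
    (hsmooth : ∀ x y, f x ≤ f y + ⟪g y, x - y⟫ + η / 2 * ‖x - y‖ ^ 2) (x y v : W) :
    2 * ⟪g x - g y - α • (x - y), v⟫ - (η - α) * ‖v‖ ^ 2 ≤
      ⟪g x - g y, x - y⟫ - α * ‖x - y‖ ^ 2 := by
  have h₁ := hstrong (x - v) y
  have h₂ := hsmooth (x - v) x
  have h₃ := hstrong (y + v) x
  have h₄ := hsmooth (y + v) y
  rw [show x - v - y = (x - y) - v by abel] at h₁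
  rw [show x - v - x = -v by abel, inner_neg_right, norm_neg] at h₂
  rw [show y + v - x = v - (x - y) by abel] at h₃
  rw [add_sub_cancel_left] at h₄
  rw [norm_sub_sq_real] at h₁
  rw [norm_sub_sq_real, real_inner_comm (x - y) v] at h₃
  simp only [inner_sub_left, inner_sub_right, real_inner_smul_left] at h₁ h₃ ⊢
  linarith

end GradientInequalities

theorem norm_gradient_step_sub_sq_le {W : Type*} [NormedAddCommGroup W] [InnerProductSpace ℝ W]
    {f : W → ℝ} {g : W → W} {α η γ : ℝ} (hα : 0 < α) (hαη : α ≤ η)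
    (hstrong : ∀ x y, f y + ⟪g y, x - y⟫ + α / 2 * ‖x - y‖ ^ 2 ≤ f x)
    (hsmooth : ∀ x y, f x ≤ f y + ⟪g y, x - y⟫ + η / 2 * ‖x - y‖ ^ 2)
    {y : W} (hmin : ∀ x, f y ≤ f x) (hγ₀ : 0 ≤ γ) (hγ : γ * η ^ 2 ≤ α) (x x' : W) :
    ‖x - γ • g x - x'‖ ^ 2 ≤ (1 - γ * α) * ‖x - x'‖ ^ 2 + γ * η * ‖x' - y‖ ^ 2 := by
  have hη : 0 < η := hα.trans_le hαη
  have hgy := gradient_eq_zero_of_smooth_of_isMin hη hsmooth hmin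
  have hkey := two_inner_sub_le_of_strongly_convex_of_smooth hstrong hsmooth x y (x' - y)
  have hmono := mul_norm_sub_sq_le_inner_of_strongly_convex hstrong x y
  have hbound := norm_gradient_sq_le_of_smooth_of_isMin hη hsmooth hmin x
  rw [hgy, sub_zero] at hkey hmono
  have hstep : γ * ‖g x‖ ^ 2 ≤ ⟪g x, x - y⟫ :=
    calc γ * ‖g x‖ ^ 2 ≤ γ * (η ^ 2 * ‖x - y‖ ^ 2) := mul_le_mul_of_nonneg_left hbound hγ₀
      _ ≤ α * ‖x - y‖ ^ 2 := by rw [← mul_assoc]; gcongr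
      _ ≤ ⟪g x, x - y⟫ := hmono
  rw [sub_right_comm, show x - x' = (x - y) - (x' - y) by abel, norm_sub_sq_real,
    norm_sub_sq_real, norm_smul, real_inner_smul_right, Real.norm_of_nonneg hγ₀]
  simp only [inner_sub_left, inner_sub_right, real_inner_smul_left, real_inner_comm (g x)] at hkey hstep ⊢
  nlinarith [mul_le_mul_of_nonneg_left hkey hγ₀, mul_le_mul_of_nonneg_left hstep hγ₀]

theorem one_step_coupled_recursion_general
    {W : Type*} [NormedAddCommGroup W] [InnerProductSpace ℝ W]
    (V : ℕ → W → ℝ) (gradV : ℕ → W → W)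
    (α η : ℝ) (hα : 0 < α) (hαη : α ≤ η)
    (hstrong : ∀ t x y, V t y + ⟪gradV t y, x - y⟫ + α / 2 * ‖x - y‖ ^ 2 ≤ V t x)
    (hsmooth : ∀ t x y, V t x ≤ V t y + ⟪gradV t y, x - y⟫ + η / 2 * ‖x - y‖ ^ 2)
    (wstar : W) (hmin : ∀ t x, V t wstar ≤ V t x)
    (γ : ℕ → ℝ) (hγpos : ∀ t, 0 < γ t) (hγ : ∀ t, γ t * η ^ 2 / α ≤ 1)
    (w w' : ℕ → W)
    (hw : ∀ t, w (t + 1) = w t - γ t • gradV t (w t))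
    (hw' : ∀ t, w' (t + 1) = w' t - γ t • gradV t wstar) :
    ∀ t, ‖w (t + 1) - w' (t + 1)‖ ^ 2 ≤
      (1 - γ t * α) * ‖w t - w' t‖ ^ 2 + γ t * η * ‖w' t - wstar‖ ^ 2 := by
  intro t
  have hgstar : gradV t wstar = 0 :=
    gradient_eq_zero_of_smooth_of_isMin (hα.trans_le hαη) (hsmooth t) (hmin t)
  rw [hw, hw', hgstar, smul_zero, sub_zero]
  exact norm_gradient_step_sub_sq_le hα hαη (hstrong t) (hsmooth t) (hmin t) (hγpos t).le
    ((div_le_one hα).mp (hγ t)) (w t) (w' t)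

theorem one_step_coupled_recursion
    {W : Type*} [NormedAddCommGroup W] [InnerProductSpace ℝ W] [CompleteSpace W]
    (V : ℕ → W → ℝ) (gradV : ℕ → W → W)
    (hgrad : ∀ t x, HasGradientAt (V t) (gradV t x) x)
    (α η : ℝ) (hα : 0 < α) (hαη : α ≤ η)
    (hstrong : ∀ t x y, V t y + ⟪gradV t y, x - y⟫ + α / 2 * ‖x - y‖ ^ 2 ≤ V t x)
    (hsmooth : ∀ t x y, V t x ≤ V t y + ⟪gradV t y, x - y⟫ + η / 2 * ‖x - y‖ ^ 2)
    (wstar : W) (hmin : ∀ t x, V t wstar ≤ V t x)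
    (γ : ℕ → ℝ) (hγpos : ∀ t, 0 < γ t) (hγ : ∀ t, γ t * η ^ 2 / α ≤ 1)
    (w w' : ℕ → W)
    (hw : ∀ t, w (t + 1) = w t - γ t • gradV t (w t))
    (hw' : ∀ t, w' (t + 1) = w' t - γ t • gradV t wstar) :
    ∀ t, ‖w (t + 1) - w' (t + 1)‖ ^ 2 ≤
      (1 - γ t * α) * ‖w t - w' t‖ ^ 2 + γ t * η * ‖w' t - wstar‖ ^ 2 :=
  one_step_coupled_recursion_general V gradV α η hα hαη hstrong hsmooth wstar hmin γ hγpos hγ w w'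
    hw hw'
end
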